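/- arXiv:1508.02452 — 2 statements merged into one kernel-verified Lean document; each statement's English description precedes it below -/
import Mathlib

section
/- Consider the trend filtering problem of minimizing φ(θ) = ½ Σ_{i=1}^n ωᵢ(yᵢ − θᵢ)² + λ ‖(Dθ)₊‖₁ over θ ∈ ℝⁿ, where D = D^{(d,n)}, λ > 0, and (v)₊ denotes the componentwise positive part. A vector θ ∈ ℝⁿ is a global minimizer of φ if and only if there exists z ∈ ℝ^{n−d} such that (i) ωᵢ(θᵢ − yᵢ) + λ (Dᵀz)ᵢ = 0 for all i, (ii) 0 ≤ zⱼ ≤ 1 for all j, and (iii) zⱼ = 1 whenever (Dθ)ⱼ > 0 and zⱼ = 0 whenever (Dθ)ⱼ < 0. -/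
open Matrix Filter Set

private lemma dot_transpose' {n m : ℕ} (D : Matrix (Fin m) (Fin n) ℝ)
    (z : Fin m → ℝ) (v : Fin n → ℝ) :
    ∑ j, z j * (D *ᵥ v) j = ∑ i, ((Dᵀ *ᵥ z) i) * v i := by
  simp only [Matrix.mulVec, dotProduct, Matrix.transpose_apply,
    Finset.mul_sum, Finset.sum_mul]
  rw [Finset.sum_comm]
  refine Finset.sum_congr rfl fun i _ => Finset.sum_congr rfl fun j _ => by ring

private lemma nonneg_of_eventually' (A Q : ℝ)
    (h : ∀ᶠ t in nhdsWithin (0:ℝ) (Set.Ioi 0), 0 ≤ A + t * Q) : 0 ≤ A := by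
  have ht : Tendsto (fun t : ℝ => A + t * Q) (nhdsWithin 0 (Set.Ioi 0)) (nhds A) := by
    have h0 : Tendsto (fun t : ℝ => A + t * Q) (nhds 0) (nhds (A + 0 * Q)) :=
      ((continuous_const.add ((continuous_id).mul continuous_const)).tendsto 0)
    simpa using h0.mono_left nhdsWithin_le_nhds
  exact ge_of_tendsto ht h

private lemma ev_small (ε : ℝ) (hε : 0 < ε) :
    ∀ᶠ t in nhdsWithin (0:ℝ) (Set.Ioi 0), t ∈ Set.Ioo 0 ε :=
  Ioo_mem_nhdsGT_of_mem ⟨le_rfl, hε⟩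

private theorem tf_aux {n m : ℕ} (D : Matrix (Fin m) (Fin n) ℝ)
    (y ω : Fin n → ℝ) (hω : ∀ i, 0 < ω i)
    (lam : ℝ) (hlam : 0 < lam) (θ : Fin n → ℝ) :
    (∀ θ' : Fin n → ℝ,
        (1/2) * ∑ i, ω i * (y i - θ i)^2 + lam * ∑ j, max ((D *ᵥ θ) j) 0 ≤
        (1/2) * ∑ i, ω i * (y i - θ' i)^2 + lam * ∑ j, max ((D *ᵥ θ') j) 0) ↔
    ∃ z : Fin m → ℝ,
      (∀ i, ω i * (θ i - y i) + lam * (Dᵀ *ᵥ z) i = 0) ∧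
      (∀ j, 0 ≤ z j ∧ z j ≤ 1) ∧
      (∀ j, 0 < (D *ᵥ θ) j → z j = 1) ∧
      (∀ j, (D *ᵥ θ) j < 0 → z j = 0) := by
  set a : Fin m → ℝ := D *ᵥ θ with ha
  set g : Fin n → ℝ := fun i => ω i * (θ i - y i) with hg
  constructor
  · -- forward direction
    intro hmin
    -- selected subgradient for a direction v
    set zsel : (Fin n → ℝ) → Fin m → ℝ := fun v j =>
      if 0 < a j then (1:ℝ) else if a j < 0 then 0 else
        if 0 < (D *ᵥ v) j then 1 else 0 with hzsel
    -- directional optimality condition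
    have key : ∀ v : Fin n → ℝ,
        0 ≤ (∑ i, g i * v i) + lam * ∑ j, zsel v j * ((D *ᵥ v) j) := by
      intro v
      set b : Fin m → ℝ := D *ᵥ v with hb
      have hE : ∀ᶠ t in nhdsWithin (0:ℝ) (Set.Ioi 0), ∀ j,
          max (a j + t * b j) 0 = max (a j) 0 + t * (zsel v j * b j) := by
        rw [eventually_all]
        intro j
        rcases lt_trichotomy (a j) 0 with hj | hj | hj
        · -- a j < 0
          by_cases hbj : b j = 0
          · filter_upwards [self_mem_nhdsWithin] with t _
            simp [hbj]
          · filter_upwards [ev_small (-a j / |b j|)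
              (div_pos (by linarith) (abs_pos.2 hbj))] with t ht
            have habs : t * |b j| < -a j := by
              have := ht.2
              have hb0 : 0 < |b j| := abs_pos.2 hbj
              calc t * |b j| < (-a j / |b j|) * |b j| := by
                    exact mul_lt_mul_of_pos_right ht.2 hb0
                _ = -a j := by field_simp
            have h1 : a j + t * b j < 0 := by
              have : t * b j ≤ t * |b j| :=
                mul_le_mul_of_nonneg_left (le_abs_self _) ht.1.le
              linarith
            simp only [hzsel]
            rw [if_neg (by linarith), if_pos hj]
            rw [max_eq_right h1.le, max_eq_right hj.le]
            ring
        · -- a j = 0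
          filter_upwards [self_mem_nhdsWithin] with t ht
          have ht0 : 0 < t := ht
          simp only [hzsel, hj]
          rw [if_neg (by simp [hj]), if_neg (by simp [hj])]
          by_cases hbj : 0 < b j
          · rw [if_pos hbj, max_eq_left (by positivity), max_eq_left le_rfl]
            ring
          · push_neg at hbj
            rw [if_neg (by push_neg; exact hbj),
              max_eq_right (by nlinarith), max_eq_right le_rfl]
            ring
        · -- 0 < a j
          by_cases hbj : b j = 0
          · filter_upwards [self_mem_nhdsWithin] with t _
            simp [hbj]
          · filter_upwards [ev_small (a j / |b j|) (by positivity)] with t ht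
            have hb0 : 0 < |b j| := abs_pos.2 hbj
            have habs : t * |b j| < a j := by
              calc t * |b j| < (a j / |b j|) * |b j| :=
                    mul_lt_mul_of_pos_right ht.2 hb0
                _ = a j := by field_simp
            have h1 : 0 < a j + t * b j := by
              have : -(t * b j) ≤ t * |b j| := by
                rw [← mul_neg]
                exact mul_le_mul_of_nonneg_left (neg_le_abs _) ht.1.le
              linarith
            simp only [hzsel]
            rw [if_pos hj, max_eq_left h1.le, max_eq_left hj.le]
            ring
      have hQ : (0:ℝ) ≤ ∑ i, ω i * v i ^ 2 :=
        Finset.sum_nonneg fun i _ => by have := hω i; positivity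
      apply nonneg_of_eventually' _ ((∑ i, ω i * v i ^ 2) / 2)
      filter_upwards [hE, self_mem_nhdsWithin] with t hEt ht0
      have ht : (0:ℝ) < t := ht0
      have hmv : D *ᵥ (fun i => θ i + t * v i) = fun j => a j + t * b j := by
        have : (fun i => θ i + t * v i) = θ + t • v := rfl
        rw [this, Matrix.mulVec_add, Matrix.mulVec_smul]
        funext j
        simp [ha, hb, smul_eq_mul]
      have hφ := hmin (fun i => θ i + t * v i)
      rw [hmv] at hφ
      have hq : (1/2) * ∑ i, ω i * (y i - (θ i + t * v i))^2
          = (1/2) * ∑ i, ω i * (y i - θ i)^2 + t * ∑ i, g i * v i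
            + t^2 * ((∑ i, ω i * v i ^ 2) / 2) := by
        have hterm : ∀ i, ω i * (y i - (θ i + t * v i))^2
            = ω i * (y i - θ i)^2 + 2 * (t * (g i * v i))
              + t^2 * (ω i * v i ^ 2) := by
          intro i; simp only [hg]; ring
        simp_rw [hterm, Finset.sum_add_distrib, ← Finset.mul_sum]
        ring
      have hp : ∑ j, max (a j + t * b j) 0
          = ∑ j, max (a j) 0 + t * ∑ j, zsel v j * b j := by
        simp_rw [hEt, Finset.sum_add_distrib, ← Finset.mul_sum]
      rw [hq, hp] at hφ
      have h2 : 0 ≤ t * ((∑ i, g i * v i + lam * ∑ j, zsel v j * b j)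
          + t * ((∑ i, ω i * v i ^ 2) / 2)) := by nlinarith [hφ]
      nlinarith [h2, ht]
    -- constrained least squares over the box S
    set lo : Fin m → ℝ := fun j => if 0 < a j then 1 else 0 with hlo
    set hi : Fin m → ℝ := fun j => if a j < 0 then 0 else 1 with hhi
    set S : Set (Fin m → ℝ) := Set.univ.pi fun j => Set.Icc (lo j) (hi j) with hS
    have hlohi : ∀ j, lo j ≤ hi j := by
      intro j; simp only [hlo, hhi]
      split_ifs with h1 h2 <;> first | linarith | norm_num
    have hScompact : IsCompact S := isCompact_univ_pi fun j => isCompact_Icc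
    have hSne : S.Nonempty := ⟨lo, fun j _ => ⟨le_rfl, hlohi j⟩⟩
    set c : Fin n → ℝ := fun i => g i / lam with hc
    set f : (Fin m → ℝ) → ℝ := fun z => ∑ i, ((Dᵀ *ᵥ z) i + c i)^2 with hf
    have hfc : Continuous f := by
      apply continuous_finset_sum; intro i _
      apply Continuous.pow
      apply Continuous.add _ continuous_const
      show Continuous fun z : Fin m → ℝ => ∑ j, Dᵀ i j * z j
      exact continuous_finset_sum _ fun j _ => continuous_const.mul (continuous_apply j)
    obtain ⟨zs, hzsS, hzsmin⟩ := hScompact.exists_isMinOn hSne hfc.continuousOn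
    set w : Fin n → ℝ := fun i => (Dᵀ *ᵥ zs) i + c i with hw
    -- first-order condition of the projection
    have hfo : ∀ z' ∈ S, 0 ≤ ∑ i, (Dᵀ *ᵥ (z' - zs)) i * w i := by
      intro z' hz'
      have := nonneg_of_eventually' (2 * ∑ i, (Dᵀ *ᵥ (z' - zs)) i * w i)
        (∑ i, ((Dᵀ *ᵥ (z' - zs)) i)^2) ?_
      · linarith
      filter_upwards [ev_small 1 one_pos] with t ht
      have hmem : zs + t • (z' - zs) ∈ S := by
        intro j _
        have h1 := hzsS j (Set.mem_univ j)
        have h2 := hz' j (Set.mem_univ j)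
        simp only [Set.mem_Icc] at h1 h2 ⊢
        simp only [Pi.add_apply, Pi.smul_apply, Pi.sub_apply, smul_eq_mul]
        constructor <;> nlinarith [ht.1, ht.2, h1.1, h1.2, h2.1, h2.2]
      have hle := hzsmin hmem
      have hexp : f (zs + t • (z' - zs))
          = f zs + t * (2 * ∑ i, (Dᵀ *ᵥ (z' - zs)) i * w i)
            + t^2 * ∑ i, ((Dᵀ *ᵥ (z' - zs)) i)^2 := by
        simp only [hf]
        have hmv : Dᵀ *ᵥ (zs + t • (z' - zs))
            = fun i => (Dᵀ *ᵥ zs) i + t * (Dᵀ *ᵥ (z' - zs)) i := by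
          rw [Matrix.mulVec_add, Matrix.mulVec_smul]
          funext i; simp [smul_eq_mul]
        rw [hmv]
        have hterm : ∀ i, ((Dᵀ *ᵥ zs) i + t * (Dᵀ *ᵥ (z' - zs)) i + c i)^2
            = ((Dᵀ *ᵥ zs) i + c i)^2 + 2 * (t * ((Dᵀ *ᵥ (z' - zs)) i * w i))
              + t^2 * ((Dᵀ *ᵥ (z' - zs)) i)^2 := by
          intro i; simp only [hw]; ring
        simp_rw [hterm, Finset.sum_add_distrib, ← Finset.mul_sum]
        ring
      have hle' : f zs ≤ f (zs + t • (z' - zs)) := hle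
      rw [hexp] at hle'
      nlinarith [ht.1]
    -- apply key with direction -w and conclude w = 0
    set v : Fin n → ℝ := fun i => -(w i) with hv
    have hDv : D *ᵥ v = fun j => -((D *ᵥ w) j) := by
      have : v = -w := rfl
      rw [this, Matrix.mulVec_neg]; rfl
    have hz'S : zsel v ∈ S := by
      intro j _
      simp only [hzsel, hlo, hhi, Set.mem_Icc]
      split_ifs with h1 h2 h3 <;> norm_num <;> linarith
    have hkey := key v
    have hgc : ∀ i, g i = lam * c i := by
      intro i; simp only [hc]; field_simp
    have hsum1 : ∑ j, zsel v j * ((D *ᵥ v) j) = -∑ i, (Dᵀ *ᵥ zsel v) i * w i := by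
      rw [dot_transpose' D (zsel v) v]
      rw [← Finset.sum_neg_distrib]
      refine Finset.sum_congr rfl fun i _ => ?_
      simp only [hv]; ring
    have hsum2 : ∑ i, g i * v i = -(lam * ∑ i, c i * w i) := by
      simp only [hv, Finset.mul_sum, ← Finset.sum_neg_distrib]
      refine Finset.sum_congr rfl fun i _ => ?_
      rw [hgc i]; ring
    rw [hsum1, hsum2] at hkey
    have hineq : ∑ i, (c i + (Dᵀ *ᵥ zsel v) i) * w i ≤ 0 := by
      have h := hkey
      have : lam * ∑ i, (c i + (Dᵀ *ᵥ zsel v) i) * w i ≤ 0 := by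
        have hexp : ∑ i, (c i + (Dᵀ *ᵥ zsel v) i) * w i
            = ∑ i, c i * w i + ∑ i, (Dᵀ *ᵥ zsel v) i * w i := by
          rw [← Finset.sum_add_distrib]
          exact Finset.sum_congr rfl fun i _ => by ring
        rw [hexp]; nlinarith [hkey]
      nlinarith [this, hlam]
    have hfo' := hfo (zsel v) hz'S
    have hmvsub : ∀ i, (Dᵀ *ᵥ (zsel v - zs)) i = (Dᵀ *ᵥ zsel v) i - (Dᵀ *ᵥ zs) i := by
      intro i; rw [Matrix.mulVec_sub]; rfl
    have hwsq : ∑ i, (w i)^2 ≤ 0 := by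
      have hexpand : ∑ i, (c i + (Dᵀ *ᵥ zsel v) i) * w i
          = ∑ i, (w i)^2 + ∑ i, (Dᵀ *ᵥ (zsel v - zs)) i * w i := by
        rw [← Finset.sum_add_distrib]
        refine Finset.sum_congr rfl fun i _ => ?_
        rw [hmvsub i]
        simp only [hw]; ring
      rw [hexpand] at hineq
      linarith
    have hw0 : ∀ i, w i = 0 := by
      intro i
      have hsq : ∀ i ∈ Finset.univ, (0:ℝ) ≤ (w i)^2 := fun i _ => sq_nonneg _
      have := (Finset.sum_eq_zero_iff_of_nonneg hsq).1
        (le_antisymm hwsq (Finset.sum_nonneg hsq)) i (Finset.mem_univ i)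
      exact pow_eq_zero_iff (by norm_num) |>.1 this
    refine ⟨zs, ?_, ?_, ?_, ?_⟩
    · intro i
      have h0 := hw0 i
      simp only [hw, hc] at h0
      have : g i + lam * (Dᵀ *ᵥ zs) i = lam * ((Dᵀ *ᵥ zs) i + g i / lam) := by
        field_simp; ring
      rw [show ω i * (θ i - y i) = g i from rfl, this, h0, mul_zero]
    · intro j
      have h1 := hzsS j (Set.mem_univ j)
      simp only [Set.mem_Icc, hlo, hhi] at h1
      constructor
      · refine le_trans ?_ h1.1; split_ifs <;> norm_num
      · refine le_trans h1.2 ?_; split_ifs <;> norm_num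
    · intro j hj
      have h1 := hzsS j (Set.mem_univ j)
      simp only [Set.mem_Icc, hlo, hhi, if_pos hj, if_neg (by linarith : ¬ a j < 0)] at h1
      linarith [h1.1, h1.2]
    · intro j hj
      have h1 := hzsS j (Set.mem_univ j)
      simp only [Set.mem_Icc, hlo, hhi, if_pos hj, if_neg (by linarith : ¬ 0 < a j)] at h1
      linarith [h1.1, h1.2]
  · -- backward direction
    rintro ⟨z, h1, h2, h3, h4⟩ θ'
    have hmax1 : ∀ j, z j * a j = max (a j) 0 := by
      intro j
      rcases lt_trichotomy (a j) 0 with hj | hj | hj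
      · rw [h4 j hj, max_eq_right hj.le, zero_mul]
      · rw [hj, mul_zero, max_self]
      · rw [h3 j hj, max_eq_left hj.le, one_mul]
    have hmax2 : ∀ j, z j * (D *ᵥ θ') j ≤ max ((D *ᵥ θ') j) 0 := by
      intro j
      rcases le_or_gt ((D *ᵥ θ') j) 0 with hj | hj
      · calc z j * (D *ᵥ θ') j ≤ 0 := mul_nonpos_of_nonneg_of_nonpos (h2 j).1 hj
          _ ≤ max _ 0 := le_max_right _ _
      · calc z j * (D *ᵥ θ') j ≤ 1 * (D *ᵥ θ') j :=
            mul_le_mul_of_nonneg_right (h2 j).2 hj.le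
          _ = (D *ᵥ θ') j := one_mul _
          _ ≤ max _ 0 := le_max_left _ _
    have hpen : ∑ j, max (a j) 0 + ∑ j, z j * ((D *ᵥ (θ' - θ)) j) ≤ ∑ j, max ((D *ᵥ θ') j) 0 := by
      have : ∀ j, max (a j) 0 + z j * ((D *ᵥ (θ' - θ)) j) ≤ max ((D *ᵥ θ') j) 0 := by
        intro j
        have hsub : (D *ᵥ (θ' - θ)) j = (D *ᵥ θ') j - a j := by
          rw [Matrix.mulVec_sub]; rfl
        rw [hsub, ← hmax1 j]
        have := hmax2 j
        nlinarith []
      calc ∑ j, max (a j) 0 + ∑ j, z j * ((D *ᵥ (θ' - θ)) j)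
          = ∑ j, (max (a j) 0 + z j * ((D *ᵥ (θ' - θ)) j)) := by
            rw [Finset.sum_add_distrib]
        _ ≤ _ := Finset.sum_le_sum fun j _ => this j
    have hquad : ∀ i, ω i * (y i - θ i)^2 + 2 * (g i * (θ' i - θ i)) ≤ ω i * (y i - θ' i)^2 := by
      intro i
      have := hω i
      have : ω i * (y i - θ' i)^2 - (ω i * (y i - θ i)^2 + 2 * (g i * (θ' i - θ i)))
          = ω i * (θ' i - θ i)^2 := by simp only [hg]; ring
      nlinarith [mul_nonneg (hω i).le (sq_nonneg (θ' i - θ i))]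
    have hsum : ∑ i, g i * (θ' i - θ i) + lam * ∑ j, z j * ((D *ᵥ (θ' - θ)) j) = 0 := by
      rw [dot_transpose' D z (θ' - θ)]
      rw [Finset.mul_sum, ← Finset.sum_add_distrib]
      apply Finset.sum_eq_zero
      intro i _
      have hsub : (θ' - θ) i = θ' i - θ i := rfl
      rw [hsub]
      simp only [hg]
      linear_combination (θ' i - θ i) * (h1 i)
    have hq' : ∑ i, ω i * (y i - θ i)^2 + 2 * ∑ i, g i * (θ' i - θ i)
        ≤ ∑ i, ω i * (y i - θ' i)^2 := by
      calc ∑ i, ω i * (y i - θ i)^2 + 2 * ∑ i, g i * (θ' i - θ i)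
          = ∑ i, (ω i * (y i - θ i)^2 + 2 * (g i * (θ' i - θ i))) := by
            rw [Finset.sum_add_distrib, Finset.mul_sum]
        _ ≤ _ := Finset.sum_le_sum fun i _ => hquad i
    have hpen' := mul_le_mul_of_nonneg_left hpen hlam.le
    nlinarith [hpen', hq', hlam]


/-- The first-order difference matrix `D^(1,m) ∈ ℝ^{(m-1)×m}`:
`D i i = 1`, `D i (i+1) = -1`, all other entries zero. -/
def diffMat1 (m : ℕ) : Matrix (Fin (m-1)) (Fin m) ℝ :=
  Matrix.of fun i j => if (j : ℕ) = (i : ℕ) then 1 else if (j : ℕ) = (i : ℕ) + 1 then -1 else 0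

/-- The `k`-th order difference matrix `D^(k,n) ∈ ℝ^{(n-k)×n}`, defined recursively by
`D^(k+1,n) = D^(1,n-k) * D^(k,n)`. -/
def diffMat : (k : ℕ) → (n : ℕ) → Matrix (Fin (n - k)) (Fin n) ℝ
  | 0, _ => Matrix.of fun i j => if (i : ℕ) = (j : ℕ) then 1 else 0
  | k+1, n => diffMat1 (n - k) * diffMat k n

/-- Optimality characterization for trend filtering with positive-part penalty: `θ` is a global
minimizer of `φ(θ) = ½ ∑ ωᵢ(yᵢ − θᵢ)² + λ‖(Dθ)₊‖₁` (with `D = D^(d,n)`) iff there is a dual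
vector `z` with `ωᵢ(θᵢ − yᵢ) + λ(Dᵀz)ᵢ = 0`, `0 ≤ zⱼ ≤ 1`, `zⱼ = 1` when `(Dθ)ⱼ > 0` and
`zⱼ = 0` when `(Dθ)ⱼ < 0`. -/
theorem trend_filtering_posPart_optimality
    (n d : ℕ) (hd : 1 ≤ d) (hdn : d < n) (y ω : Fin n → ℝ) (hω : ∀ i, 0 < ω i)
    (lam : ℝ) (hlam : 0 < lam) (θ : Fin n → ℝ) :
    (∀ θ' : Fin n → ℝ,
        (1/2) * ∑ i, ω i * (y i - θ i)^2 + lam * ∑ j, max ((diffMat d n *ᵥ θ) j) 0 ≤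
        (1/2) * ∑ i, ω i * (y i - θ' i)^2 + lam * ∑ j, max ((diffMat d n *ᵥ θ') j) 0) ↔
    ∃ z : Fin (n-d) → ℝ,
      (∀ i, ω i * (θ i - y i) + lam * ((diffMat d n)ᵀ *ᵥ z) i = 0) ∧
      (∀ j, 0 ≤ z j ∧ z j ≤ 1) ∧
      (∀ j, 0 < (diffMat d n *ᵥ θ) j → z j = 1) ∧
      (∀ j, (diffMat d n *ᵥ θ) j < 0 → z j = 0) := by
  exact tf_aux (diffMat d n) y ω hω lam hlam θ
end

section
/- Sufficient optimality for the subspace minimizer in trend filtering with positive-part penalty: let D = D^{(d,n)}, λ > 0, and let (P, N, A) be a partition of {1,…,n−d}. Suppose (θ, z) ∈ ℝⁿ × ℝ^{n−d} satisfies zⱼ = 1 for j ∈ P, zⱼ = 0 for j ∈ N, ωᵢ(θᵢ − yᵢ) + λ(Dᵀz)ᵢ = 0 for all i, and (Dθ)ⱼ = 0 for j ∈ A. If additionally (Dθ)ⱼ ≥ 0 for all j ∈ P, (Dθ)ⱼ ≤ 0 for all j ∈ N, and 0 ≤ zⱼ ≤ 1 for all j ∈ A (i.e., the violation set V = V_P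 ∪ V_N ∪ V_{AP} ∪ V_{AN} is empty), then θ is a global minimizer of φ(θ) = ½ Σᵢ ωᵢ(yᵢ − θᵢ)² + λ ‖(Dθ)₊‖₁. -/
open Matrix

/-- Sufficient optimality of a subspace minimizer for trend filtering with positive-part
penalty: if `(θ, z)` is the subspace minimizer for the partition `(P, N, A)` and the violation
set `V = V_P ∪ V_N ∪ V_AP ∪ V_AN` is empty, then `θ` globally minimizes
`φ(θ) = ½ ∑ ωᵢ(yᵢ − θᵢ)² + λ‖(Dθ)₊‖₁`. -/
theorem trend_filtering_subspace_minimizer_optimal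
    (n d : ℕ) (hd : 1 ≤ d) (hdn : d < n) (y ω : Fin n → ℝ) (hω : ∀ i, 0 < ω i)
    (lam : ℝ) (hlam : 0 < lam)
    (P N A : Set (Fin (n-d)))
    (hPN : Disjoint P N) (hPA : Disjoint P A) (hNA : Disjoint N A)
    (hcover : P ∪ N ∪ A = Set.univ)
    (θ : Fin n → ℝ) (z : Fin (n-d) → ℝ)
    (hzP : ∀ j ∈ P, z j = 1) (hzN : ∀ j ∈ N, z j = 0)
    (hstat : ∀ i, ω i * (θ i - y i) + lam * ((diffMat d n)ᵀ *ᵥ z) i = 0)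
    (hDA : ∀ j ∈ A, (diffMat d n *ᵥ θ) j = 0)
    (hDP : ∀ j ∈ P, 0 ≤ (diffMat d n *ᵥ θ) j)
    (hDN : ∀ j ∈ N, (diffMat d n *ᵥ θ) j ≤ 0)
    (hzA : ∀ j ∈ A, 0 ≤ z j ∧ z j ≤ 1) :
    ∀ θ' : Fin n → ℝ,
      (1/2) * ∑ i, ω i * (y i - θ i)^2 + lam * ∑ j, max ((diffMat d n *ᵥ θ) j) 0 ≤
      (1/2) * ∑ i, ω i * (y i - θ' i)^2 + lam * ∑ j, max ((diffMat d n *ᵥ θ') j) 0 := by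

  intro θ'
  set a := diffMat d n *ᵥ θ with ha
  set a' := diffMat d n *ᵥ θ' with ha'
  have hj : ∀ j, z j * (a' j - a j) ≤ max (a' j) 0 - max (a j) 0 := by
    intro j
    have hjmem : j ∈ P ∪ N ∪ A := by rw [hcover]; trivial
    rcases hjmem with (hP | hN) | hA
    · rw [hzP j hP, max_eq_left (hDP j hP)]
      have := le_max_left (a' j) (0:ℝ)
      linarith
    · rw [hzN j hN, max_eq_right (hDN j hN)]
      have := le_max_right (a' j) (0:ℝ)
      linarith
    · obtain ⟨h0, h1⟩ := hzA j hA
      rw [hDA j hA]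
      simp only [max_self]
      rcases le_total (a' j) 0 with h | h
      · rw [max_eq_right h]
        nlinarith
      · rw [max_eq_left h]
        nlinarith
  have hsum : ∑ j, z j * (a' j - a j) ≤ ∑ j, max (a' j) 0 - ∑ j, max (a j) 0 := by
    rw [← Finset.sum_sub_distrib]
    exact Finset.sum_le_sum fun j _ => hj j
  have dot : ∑ i, ((diffMat d n)ᵀ *ᵥ z) i * (θ' i - θ i) = ∑ j, z j * (a' j - a j) := by
    simp only [ha, ha', Matrix.mulVec, dotProduct, Matrix.transpose_apply,
      Finset.sum_mul, Finset.mul_sum, mul_sub, ← Finset.sum_sub_distrib]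
    rw [Finset.sum_comm]
    exact Finset.sum_congr rfl fun j _ => Finset.sum_congr rfl fun i _ => by ring
  have stat : ∑ i, ω i * (θ i - y i) * (θ' i - θ i)
      = -(lam * ∑ j, z j * (a' j - a j)) := by
    rw [← dot, Finset.mul_sum, ← Finset.sum_neg_distrib]
    exact Finset.sum_congr rfl fun i _ => by linear_combination (θ' i - θ i) * hstat i
  have quad : ∑ i, ω i * (y i - θ i)^2 + 2 * ∑ i, ω i * (θ i - y i) * (θ' i - θ i)
      ≤ ∑ i, ω i * (y i - θ' i)^2 := by
    rw [Finset.mul_sum, ← Finset.sum_add_distrib]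
    refine Finset.sum_le_sum fun i _ => ?_
    nlinarith [mul_nonneg (hω i).le (sq_nonneg (θ' i - θ i))]
  rw [stat] at quad
  have key := mul_le_mul_of_nonneg_left hsum hlam.le
  rw [mul_sub] at key
  linarith
end
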